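/- Let (M_t) be a continuous uniformly integrable martingale with M_0 = 0, and suppose p(b,b̄) = P(inf M > b, sup M < b̄) is discontinuous at (b,b̄), i.e. P(inf M ≥ b, sup M ≤ b̄) > P(inf M > b, sup M < b̄). Then at least one of the events {inf M > b, sup M = b̄} and {inf M = b, sup M < b̄} has positive probability, while the event {inf M = b and sup M = b̄} has probability zero. -/

import Mathlib

/-!
Fix a level `u ≥ M₀`. At the first time `ρ` the path exceeds `u`, continuity forces `M_ρ = u`,
so optional sampling gives `𝔼[u - M∞; sup M > u] = 0`. Letting the level increase to `u` gives
`𝔼[u - M∞; sup M ≥ u] = 0`, hence `𝔼[u - M∞; sup M = u] = 0`; as `M∞ ≤ u` on `{sup M = u}`,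
`M∞ = u` a.s. there. By symmetry `M∞ = b` a.s. on `{inf M = b}`, so `{inf M = b, sup M = b̄}` is
null and the jump of `p` at `(b, b̄)` must charge one of the two remaining boundary pieces.

The hitting time of an open set is only an optional time, and optional sampling is available for
stopping times with countably many values; so we sample at `ρ` rounded strictly up to the grid
`ℕ / (k + 1)` and capped at `k`, and let `k → ∞` using the uniform integrability of
`𝔼[M∞ | ℱ_τ]`.
-/

open MeasureTheory Set Filter Topology
open scoped NNReal ENNReal

theorem Continuous.bddAbove_range_of_tendsto_cocompact {β α : Type*} [TopologicalSpace β]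
    [LinearOrder α] [TopologicalSpace α] [OrderClosedTopology α] {f : β → α}
    (hf : Continuous f) {L : α} (hL : Tendsto f (cocompact β) (𝓝 L)) : BddAbove (range f) := by
  by_cases h : ∃ x₀, L < f x₀
  · obtain ⟨x₀, hx₀⟩ := h
    obtain ⟨x, hx⟩ := hf.exists_forall_ge' x₀ (hL.eventually (eventually_le_nhds hx₀))
    exact ⟨f x, forall_mem_range.2 hx⟩
  · push Not at h
    exact ⟨L, forall_mem_range.2 h⟩

theorem Real.iSup_neg_eq_neg_iInf {ι : Sort*} (f : ι → ℝ) : ⨆ i, -f i = -⨅ i, f i := by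
  simpa using (Real.iInf_mul_of_nonpos (r := -1) (by norm_num) f).symm

noncomputable def nextGridPoint (k : ℕ) (x : ℝ≥0) : ℝ≥0 := (⌊x * (k + 1)⌋₊ + 1) / (k + 1)

lemma nextGridPoint_le_iff (k : ℕ) (x t : ℝ≥0) :
    nextGridPoint k x ≤ t ↔ x < ⌊t * (k + 1)⌋₊ / (k + 1) := by
  have hk : (0 : ℝ≥0) < k + 1 := by positivity
  rw [nextGridPoint, div_le_iff₀ hk, lt_div_iff₀ hk, ← Nat.cast_succ, ← Nat.le_floor_iff zero_le,
    ← Nat.lt_iff_add_one_le, Nat.floor_lt zero_le]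

lemma lt_nextGridPoint (k : ℕ) (x : ℝ≥0) : x < nextGridPoint k x := by
  rw [nextGridPoint, lt_div_iff₀ (by positivity)]
  exact_mod_cast Nat.lt_floor_add_one _

lemma nextGridPoint_le (k : ℕ) (x : ℝ≥0) : nextGridPoint k x ≤ x + 1 / (k + 1) := by
  rw [nextGridPoint, div_le_iff₀ (by positivity), add_mul, one_div_mul_cancel (by positivity)]
  gcongr
  exact Nat.floor_le zero_le

lemma tendsto_nextGridPoint (x : ℝ≥0) : Tendsto (nextGridPoint · x) atTop (𝓝 x) := by
  refine tendsto_of_tendsto_of_tendsto_of_le_of_le tendsto_const_nhds ?_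
    (fun k => (lt_nextGridPoint k x).le) (fun k => nextGridPoint_le k x)
  simpa using tendsto_const_nhds.add (tendsto_one_div_add_atTop_nhds_zero_nat (𝕜 := ℝ≥0))

namespace MeasureTheory

variable {Ω : Type*} {m0 : MeasurableSpace Ω} {μ : Measure Ω}

theorem measure_setOf_le_and_le_le_add {β : Type*} [LinearOrder β] (X Y : Ω → β) (a b : β) :
    μ {ω | a ≤ X ω ∧ Y ω ≤ b} ≤ μ {ω | a < X ω ∧ Y ω < b} + μ {ω | a < X ω ∧ Y ω = b} +
      μ {ω | X ω = a ∧ Y ω < b} + μ {ω | X ω = a ∧ Y ω = b} := by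
  refine le_trans (measure_mono ?_) <| (measure_union_le _ _).trans <|
    add_le_add_left ((measure_union_le _ _).trans (add_le_add_left (measure_union_le _ _) _)) _
  rintro ω ⟨hX, hY⟩
  rcases hX.lt_or_eq with hX | hX <;> rcases hY.lt_or_eq with hY | hY
  exacts [Or.inl (Or.inl (Or.inl ⟨hX, hY⟩)), Or.inl (Or.inl (Or.inr ⟨hX, hY⟩)),
    Or.inl (Or.inr ⟨hX.symm, hY⟩), Or.inr ⟨hX.symm, hY⟩]

lemma UniformIntegrable.comp {ι κ β : Type*} [NormedAddCommGroup β] {f : ι → Ω → β}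
    {p : ℝ≥0∞} (hf : UniformIntegrable f p μ) (s : κ → ι) :
    UniformIntegrable (fun k => f (s k)) p μ :=
  ⟨fun k => hf.1 (s k), fun _ hε => let ⟨δ, hδ, h⟩ := hf.2.1 hε; ⟨δ, hδ, fun k => h (s k)⟩,
    let ⟨C, hC⟩ := hf.2.2; ⟨C, fun k => hC (s k)⟩⟩

lemma UniformIntegrable.neg {ι β : Type*} [NormedAddCommGroup β] {f : ι → Ω → β}
    {p : ℝ≥0∞} (hf : UniformIntegrable f p μ) : UniformIntegrable (-f) p μ :=
  ⟨fun i => (hf.1 i).neg, hf.2.1.neg, let ⟨C, hC⟩ := hf.2.2; ⟨C, fun i => by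
    simpa only [Pi.neg_apply, eLpNorm_neg] using hC i⟩⟩

theorem UniformIntegrable.tendsto_integral_of_ae_tendsto [IsFiniteMeasure μ]
    {f : ℕ → Ω → ℝ} {g : Ω → ℝ} (hf : UniformIntegrable f 1 μ)
    (hfg : ∀ᵐ ω ∂μ, Tendsto (fun n => f n ω) atTop (𝓝 (g ω))) :
    Tendsto (fun n => ∫ ω, f n ω ∂μ) atTop (𝓝 (∫ ω, g ω ∂μ)) :=
  tendsto_integral_of_L1' g (hf.integrable_of_ae_tendsto hfg).aestronglyMeasurable
    (Eventually.of_forall fun n => (hf.memLp n).integrable le_rfl)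
    (tendsto_Lp_finite_of_tendsto_ae le_rfl ENNReal.one_ne_top hf.1
      (hf.memLp_of_ae_tendsto hfg) hf.2.1 hfg)

theorem setIntegral_sub_eq_zero_of_antitone [IsFiniteMeasure μ] {S : ℕ → Set Ω}
    (hS : ∀ j, MeasurableSet (S j)) (hanti : Antitone S) {v : ℕ → ℝ} {u : ℝ}
    (hv : Tendsto v atTop (𝓝 u)) {g : Ω → ℝ} (hg : Integrable g μ)
    (h : ∀ j, ∫ ω in S j, (v j - g ω) ∂μ = 0) :
    ∫ ω in ⋂ j, S j, (u - g ω) ∂μ = 0 := by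
  have hmeasure : Tendsto (fun j => μ.real (S j)) atTop (𝓝 (μ.real (⋂ j, S j))) := by
    simpa using tendsto_setIntegral_of_antitone (μ := μ) (f := fun _ => (1 : ℝ)) hS hanti
      ⟨0, (integrable_const 1).integrableOn⟩
  have hint := tendsto_setIntegral_of_antitone hS hanti ⟨0, hg.integrableOn⟩
  have hconst_sub : ∀ {c : ℝ} {A : Set Ω},
      ∫ ω in A, (c - g ω) ∂μ = c * μ.real A - ∫ ω in A, g ω ∂μ :=
    fun {c A} => by
      rw [integral_sub (integrable_const c) hg.integrableOn, setIntegral_const, smul_eq_mul,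
        mul_comm]
  rw [hconst_sub]
  refine tendsto_nhds_unique ((hv.mul hmeasure).sub hint) ?_
  simp_rw [← hconst_sub, h]
  exact tendsto_const_nhds

theorem ae_eq_of_setIntegral_sub_eq_zero [IsFiniteMeasure μ] {A : Set Ω} (hA : MeasurableSet A)
    {g : Ω → ℝ} {u : ℝ} (hg : Integrable g μ) (hle : ∀ᵐ ω ∂μ, ω ∈ A → g ω ≤ u)
    (h : ∫ ω in A, (u - g ω) ∂μ = 0) : ∀ᵐ ω ∂μ, ω ∈ A → g ω = u := by
  have hnonneg : 0 ≤ᵐ[μ.restrict A] fun ω => u - g ω :=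
    (ae_restrict_iff' hA).2 (hle.mono fun ω h hω => sub_nonneg.2 (h hω))
  have hzero := (setIntegral_eq_zero_iff_of_nonneg_ae hnonneg
    ((integrable_const u).sub hg).integrableOn).1 h
  filter_upwards [(ae_restrict_iff' hA).1 hzero] with ω h hω
  exact (sub_eq_zero.1 (h hω)).symm

theorem Martingale.ae_eq_condExp_of_uniformIntegrable {ι : Type*} [Preorder ι]
    [(atTop : Filter ι).IsCountablyGenerated] [(atTop : Filter ι).NeBot] [IsFiniteMeasure μ]
    {ℱ : Filtration ι m0} {f : ι → Ω → ℝ} {g : Ω → ℝ} (hf : Martingale f ℱ μ)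
    (hUI : UniformIntegrable f 1 μ) (hfg : ∀ᵐ ω ∂μ, Tendsto (fun i => f i ω) atTop (𝓝 (g ω)))
    (i : ι) : f i =ᵐ[μ] μ[g | ℱ i] := by
  obtain ⟨s, hs⟩ := exists_seq_tendsto (atTop : Filter ι)
  have hfgs : ∀ᵐ ω ∂μ, Tendsto (fun n => f (s n) ω) atTop (𝓝 (g ω)) :=
    hfg.mono fun ω h => h.comp hs
  have hg := hUI.memLp_of_ae_tendsto hfg
  have hL1 : Tendsto (fun n => eLpNorm (f (s n) - g) 1 μ) atTop (𝓝 0) :=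
    tendsto_Lp_finite_of_tendsto_ae le_rfl ENNReal.one_ne_top (hUI.comp s).1 hg (hUI.comp s).2.1
      hfgs
  have hbound : ∀ᶠ n in atTop, eLpNorm (f i - μ[g | ℱ i]) 1 μ ≤ eLpNorm (f (s n) - g) 1 μ := by
    filter_upwards [hs.eventually_ge_atTop i] with n hn
    calc eLpNorm (f i - μ[g | ℱ i]) 1 μ = eLpNorm (μ[f (s n) - g | ℱ i]) 1 μ := by
          refine eLpNorm_congr_ae ?_
          filter_upwards [hf.condExp_ae_eq hn, condExp_sub (hf.integrable (s n))
            (hg.integrable le_rfl) (ℱ i)] with ω h1 h2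
          simp [h1, h2]
      _ ≤ eLpNorm (f (s n) - g) 1 μ := eLpNorm_condExp_le_eLpNorm _ le_rfl
  have hzero : eLpNorm (f i - μ[g | ℱ i]) 1 μ = 0 :=
    le_antisymm (ge_of_tendsto hL1 hbound) bot_le
  rw [← sub_ae_eq_zero]
  exact (eLpNorm_eq_zero_iff (((hf.stronglyAdapted i).mono (ℱ.le i)).aestronglyMeasurable.sub
    (stronglyMeasurable_condExp.mono (ℱ.le i)).aestronglyMeasurable) one_ne_zero).1 hzero

section Hitting

variable {M : ℝ≥0 → Ω → ℝ} {u : ℝ} {ω : Ω} {ℱ : Filtration ℝ≥0 m0}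

theorem apply_hittingAfter_Ioi_eq (hc : Continuous fun t => M t ω) (h0 : M 0 ω ≤ u) {x : ℝ≥0}
    (hx : hittingAfter M (Ioi u) 0 ω = x) : M x ω = u := by
  refine le_antisymm ?_ ?_
  · have hbefore : Iio x ⊆ {t | M t ω ≤ u} := fun t ht => mem_ofPred.2 <| not_lt.1 <|
      notMem_of_lt_hittingAfter (u := M) (s := Ioi u) (ω := ω) (by rw [hx]; exact_mod_cast ht)
        zero_le
    rcases eq_zero_or_pos x with rfl | hpos
    · exact h0
    · refine (isClosed_le hc continuous_const).closure_subset_iff.2 hbefore ?_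
      rw [closure_Iio' (a := x) ⟨0, hpos⟩]
      exact self_mem_Iic
  · classical
    simp only [hittingAfter] at hx
    split_ifs at hx with hex
    · have hx' : sInf {i | 0 ≤ i ∧ M i ω ∈ Ioi u} = x := WithTop.coe_inj.1 hx
      refine (isClosed_le continuous_const hc).closure_subset_iff.2 ?_
        (hx' ▸ csInf_mem_closure hex (OrderBot.bddBelow _))
      exact fun t ht => le_of_lt (mem_Ioi.1 ht.2)
    · exact absurd hx WithTop.top_ne_coe

theorem Adapted.measurableSet_hittingAfter_Ioi_lt (hA : Adapted ℱ M)
    (hc : ∀ ω, Continuous fun t => M t ω) (u : ℝ) (t : ℝ≥0) :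
    MeasurableSet[ℱ t] {ω | hittingAfter M (Ioi u) 0 ω < t} := by
  obtain ⟨D, hDc, hDd⟩ := TopologicalSpace.exists_countable_dense ℝ≥0
  have hset : {ω | hittingAfter M (Ioi u) 0 ω < t} = ⋃ q ∈ D ∩ Iio t, {ω | u < M q ω} := by
    ext ω
    simp only [mem_ofPred_eq, hittingAfter_lt_iff, mem_iUnion, mem_Ico, mem_Ioi, mem_inter_iff,
      mem_Iio, exists_prop]
    constructor
    · rintro ⟨s, ⟨-, hst⟩, hs⟩
      obtain ⟨q, hqD, hqt, hq⟩ := hDd.exists_mem_open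
        (isOpen_Iio.inter (isOpen_lt continuous_const (hc ω))) ⟨s, hst, hs⟩
      exact ⟨q, ⟨hqD, hqt⟩, hq⟩
    · rintro ⟨q, ⟨-, hqt⟩, hq⟩
      exact ⟨q, ⟨zero_le, hqt⟩, hq⟩
  rw [hset]
  exact MeasurableSet.biUnion (hDc.mono inter_subset_left) fun q hq =>
    ℱ.mono hq.2.le _ (measurableSet_lt measurable_const (hA q))

theorem Adapted.measurableSet_exists_lt (hA : Adapted ℱ M) (hc : ∀ ω, Continuous fun t => M t ω)
    (u : ℝ) : MeasurableSet {ω | ∃ t, u < M t ω} := by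
  have : {ω | ∃ t, u < M t ω} = ⋃ n : ℕ, {ω | hittingAfter M (Ioi u) 0 ω < (n : ℝ≥0)} := by
    ext ω
    simp only [mem_iUnion, mem_ofPred_eq, hittingAfter_lt_iff, mem_Ico, mem_Ioi]
    exact ⟨fun ⟨t, ht⟩ => let ⟨n, hn⟩ := exists_nat_gt t; ⟨n, t, ⟨zero_le, hn⟩, ht⟩,
      fun ⟨_, t, _, ht⟩ => ⟨t, ht⟩⟩
  rw [this]
  exact MeasurableSet.iUnion fun n => ℱ.le _ _ (hA.measurableSet_hittingAfter_Ioi_lt hc u n)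

theorem isStoppingTime_map_nextGridPoint {ρ : Ω → WithTop ℝ≥0}
    (hρ : ∀ t : ℝ≥0, MeasurableSet[ℱ t] {ω | ρ ω < t}) (k : ℕ) :
    IsStoppingTime ℱ fun ω => (ρ ω).map (nextGridPoint k) := by
  intro t
  set s : ℝ≥0 := ⌊t * (k + 1)⌋₊ / (k + 1) with hs
  have hset : {ω | (ρ ω).map (nextGridPoint k) ≤ t} = {ω | ρ ω < s} := by
    ext ω
    simp only [mem_ofPred_eq]
    cases ρ ω with
    | top => exact iff_of_false (WithTop.not_top_le_coe t) not_top_lt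
    | coe x => rw [WithTop.map_coe, WithTop.coe_le_coe, WithTop.coe_lt_coe, nextGridPoint_le_iff]
  rw [hset]
  refine ℱ.mono ?_ _ (hρ s)
  rw [hs, div_le_iff₀ (by positivity)]
  exact Nat.floor_le zero_le

noncomputable def gridHittingTime (M : ℝ≥0 → Ω → ℝ) (u : ℝ) (k : ℕ) (ω : Ω) : WithTop ℝ≥0 :=
  min ((hittingAfter M (Ioi u) 0 ω).map (nextGridPoint k)) ((k : ℝ≥0) : WithTop ℝ≥0)

theorem Adapted.isStoppingTime_gridHittingTime (hA : Adapted ℱ M)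
    (hc : ∀ ω, Continuous fun t => M t ω) (u : ℝ) (k : ℕ) :
    IsStoppingTime ℱ (gridHittingTime M u k) :=
  (isStoppingTime_map_nextGridPoint (hA.measurableSet_hittingAfter_Ioi_lt hc u) k).min_const k

lemma gridHittingTime_le (k : ℕ) (ω : Ω) : gridHittingTime M u k ω ≤ (k : ℝ≥0) := min_le_right _ _

lemma countable_range_gridHittingTime (M : ℝ≥0 → Ω → ℝ) (u : ℝ) (k : ℕ) :
    (range (gridHittingTime M u k)).Countable := by
  refine (((countable_range fun n : ℕ => (n : ℝ≥0) / (k + 1)).image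
    ((↑) : ℝ≥0 → WithTop ℝ≥0)).insert ((k : ℝ≥0) : WithTop ℝ≥0)).mono ?_
  rintro _ ⟨ω, rfl⟩
  simp only [gridHittingTime]
  cases hittingAfter M (Ioi u) 0 ω with
  | top => rw [WithTop.map_top, min_top_left]; exact mem_insert _ _
  | coe x =>
    rw [WithTop.map_coe]
    rcases min_choice ((nextGridPoint k x : ℝ≥0) : WithTop ℝ≥0) ((k : ℝ≥0) : WithTop ℝ≥0)
      with h | h <;>
      rw [h]
    · exact mem_insert_of_mem _ ⟨_, ⟨⌊x * (k + 1)⌋₊ + 1, by simp [nextGridPoint]⟩, rfl⟩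
    · exact mem_insert _ _

open Classical in
theorem tendsto_stoppedValue_gridHittingTime (hc : Continuous fun t => M t ω) (h0 : M 0 ω ≤ u)
    {L : ℝ} (hL : Tendsto (fun t => M t ω) atTop (𝓝 L)) :
    Tendsto (fun k => stoppedValue M (gridHittingTime M u k) ω) atTop
      (𝓝 (if ∃ t, u < M t ω then u else L)) := by
  simp only [stoppedValue, gridHittingTime]
  cases h : hittingAfter M (Ioi u) 0 ω with
  | top =>
    have hnever : ¬∃ t, u < M t ω := fun ⟨t, ht⟩ => hittingAfter_eq_top_iff.1 h t zero_le ht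
    rw [if_neg hnever]
    refine (hL.comp tendsto_natCast_atTop_atTop).congr fun k => ?_
    rw [WithTop.map_top, min_top_left]
    rfl
  | coe x =>
    have hcross : ∃ t, u < M t ω := by
      obtain ⟨t, -, ht⟩ := hittingAfter_lt_iff.1 (h ▸ WithTop.coe_lt_coe.2 (lt_add_one x))
      exact ⟨t, ht⟩
    rw [if_pos hcross, ← apply_hittingAfter_Ioi_eq hc h0 h]
    refine ((hc.tendsto x).comp (tendsto_nextGridPoint x)).congr' ?_
    filter_upwards [tendsto_natCast_atTop_atTop.eventually_ge_atTop (x + 1)] with k hk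
    have hle : nextGridPoint k x ≤ k := by
      refine (nextGridPoint_le k x).trans (le_trans ?_ hk)
      gcongr
      exact div_le_one_of_le₀ (by simp) zero_le
    rw [WithTop.map_coe, min_eq_left (WithTop.coe_le_coe.2 hle)]
    rfl

variable [IsFiniteMeasure μ] {g : Ω → ℝ}

theorem Martingale.setIntegral_sub_limit_eq_zero_of_crossing (hmart : Martingale M ℱ μ)
    (hc : ∀ ω, Continuous fun t => M t ω) (hUI : UniformIntegrable M 1 μ)
    (hlim : ∀ᵐ ω ∂μ, Tendsto (fun t => M t ω) atTop (𝓝 (g ω))) (h0 : ∀ ω, M 0 ω ≤ u) :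
    ∫ ω in {ω | ∃ t, u < M t ω}, (u - g ω) ∂μ = 0 := by
  classical
  set A := {ω | ∃ t, u < M t ω}
  have hAd : Adapted ℱ M := hmart.stronglyAdapted.adapted
  have hA : MeasurableSet A := hAd.measurableSet_exists_lt hc u
  have hg : Integrable g μ := hUI.integrable_of_ae_tendsto hlim
  have hτ := hAd.isStoppingTime_gridHittingTime hc u
  have hsampling : ∀ k, stoppedValue M (gridHittingTime M u k) =ᵐ[μ] μ[g | (hτ k).measurableSpace] :=
    fun k => (hmart.stoppedValue_ae_eq_condExp_of_le_const_of_countable_range (hτ k)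
      (gridHittingTime_le k) (countable_range_gridHittingTime M u k)).trans <|
      (condExp_congr_ae (hmart.ae_eq_condExp_of_uniformIntegrable hUI hlim _)).trans <|
      condExp_condExp_of_le ((hτ k).measurableSpace_le_of_le_const (gridHittingTime_le k))
        (ℱ.le _)
  have hUIsampled : UniformIntegrable (fun k => stoppedValue M (gridHittingTime M u k)) 1 μ :=
    (hg.uniformIntegrable_condExp fun k => (hτ k).measurableSpace_le).ae_eq
      fun k => (hsampling k).symm
  have hconv : ∀ᵐ ω ∂μ, Tendsto (fun k => stoppedValue M (gridHittingTime M u k) ω) atTop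
      (𝓝 (A.piecewise (fun _ => u) g ω)) :=
    hlim.mono fun ω hω => tendsto_stoppedValue_gridHittingTime (hc ω) (h0 ω) hω
  have hpiecewise : ∫ ω, A.piecewise (fun _ => u) g ω ∂μ = ∫ ω, g ω ∂μ := by
    refine tendsto_nhds_unique (hUIsampled.tendsto_integral_of_ae_tendsto hconv) ?_
    simp_rw [integral_congr_ae (hsampling _), integral_condExp (hτ _).measurableSpace_le]
    exact tendsto_const_nhds
  rw [integral_piecewise hA (integrable_const u).integrableOn hg.integrableOn,
    ← integral_add_compl hA hg] at hpiecewise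
  rw [integral_sub (integrable_const u).integrableOn hg.integrableOn]
  linarith

theorem Martingale.ae_limit_eq_of_iSup_eq (hmart : Martingale M ℱ μ)
    (hc : ∀ ω, Continuous fun t => M t ω) (hUI : UniformIntegrable M 1 μ)
    (hlim : ∀ᵐ ω ∂μ, Tendsto (fun t => M t ω) atTop (𝓝 (g ω))) (hM0 : ∀ ω, M 0 ω = 0)
    (hu : 0 < u) : ∀ᵐ ω ∂μ, ⨆ t, M t ω = u → g ω = u := by
  have hcross : ∀ w, 0 ≤ w → ∫ ω in {ω | ∃ t, w < M t ω}, (w - g ω) ∂μ = 0 := fun w hw =>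
    hmart.setIntegral_sub_limit_eq_zero_of_crossing hc hUI hlim fun ω => (hM0 ω).trans_le hw
  have hmeas : ∀ w, MeasurableSet {ω | ∃ t, w < M t ω} :=
    hmart.stronglyAdapted.adapted.measurableSet_exists_lt hc
  obtain ⟨v, hv_mono, hv_mem, hv_lim⟩ := exists_seq_strictMono_tendsto' hu
  -- on paths bounded above, `D = {sup M ≥ u}` and `O = {sup M > u}`
  set D := ⋂ j, {ω | ∃ t, v j < M t ω}
  set O := {ω | ∃ t, u < M t ω}
  have hOD : O ⊆ D := fun ω ⟨t, ht⟩ => mem_iInter.2 fun j => ⟨t, (hv_mem j).2.trans ht⟩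
  have hDO_meas : MeasurableSet (D \ O) := (MeasurableSet.iInter fun j => hmeas _).diff (hmeas u)
  have hg : Integrable g μ := hUI.integrable_of_ae_tendsto hlim
  have hint : Integrable (fun ω => u - g ω) μ := (integrable_const u).sub hg
  have hD : ∫ ω in D, (u - g ω) ∂μ = 0 :=
    setIntegral_sub_eq_zero_of_antitone (fun j => hmeas _)
      (fun i j hij ω ⟨t, ht⟩ => ⟨t, (hv_mono.monotone hij).trans_lt ht⟩) hv_lim hg
      fun j => hcross _ (hv_mem j).1.le
  have hDO : ∫ ω in D \ O, (u - g ω) ∂μ = 0 := by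
    rw [setIntegral_sdiff (hmeas u) hint.integrableOn hOD, hD, hcross u hu.le, sub_zero]
  have hle : ∀ᵐ ω ∂μ, ω ∈ D \ O → g ω ≤ u := hlim.mono fun ω hω hmem =>
    le_of_tendsto' hω fun t => not_lt.1 fun h => hmem.2 ⟨t, h⟩
  filter_upwards [ae_eq_of_setIntegral_sub_eq_zero hDO_meas hg hle hDO, hlim]
    with ω hlimit hω hsup
  have hbdd := (hc ω).bddAbove_range_of_tendsto_cocompact (by rwa [cocompact_eq_atTop])
  have hωD : ω ∈ D := mem_iInter.2 fun j => exists_lt_of_lt_ciSup (hsup ▸ (hv_mem j).2)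
  have hωO : ω ∉ O := fun ⟨t, ht⟩ => (hsup ▸ le_ciSup hbdd t).not_gt ht
  exact hlimit ⟨hωD, hωO⟩

theorem Martingale.ae_limit_eq_of_iInf_eq (hmart : Martingale M ℱ μ)
    (hc : ∀ ω, Continuous fun t => M t ω) (hUI : UniformIntegrable M 1 μ)
    (hlim : ∀ᵐ ω ∂μ, Tendsto (fun t => M t ω) atTop (𝓝 (g ω))) (hM0 : ∀ ω, M 0 ω = 0)
    (hu : u < 0) : ∀ᵐ ω ∂μ, ⨅ t, M t ω = u → g ω = u := by
  filter_upwards [hmart.neg.ae_limit_eq_of_iSup_eq (fun ω => (hc ω).neg) hUI.neg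
    (hlim.mono fun ω h => h.neg) (by simp [hM0]) (neg_pos.2 hu)] with ω h hinf
  simpa using h (by simp [Real.iSup_neg_eq_neg_iInf, hinf])

end Hitting

end MeasureTheory

theorem stmt19 {Ω : Type*} {m0 : MeasurableSpace Ω} (P : Measure Ω)
    [IsProbabilityMeasure P] (ℱ : Filtration ℝ≥0 m0)
    (M : ℝ≥0 → Ω → ℝ) (Minf : Ω → ℝ)
    (hmart : Martingale M ℱ P)
    (hcont : ∀ ω, Continuous fun t => M t ω)
    (hUI : UniformIntegrable M 1 P)
    (hM0 : ∀ ω, M 0 ω = 0)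
    (hlim : ∀ᵐ ω ∂P, Tendsto (fun t => M t ω) atTop (𝓝 (Minf ω)))
    (lb ub : ℝ) (hlb : lb < 0) (hub : 0 < ub)
    (hdisc : P {ω | lb < (⨅ t, M t ω) ∧ (⨆ t, M t ω) < ub} <
      P {ω | lb ≤ (⨅ t, M t ω) ∧ (⨆ t, M t ω) ≤ ub}) :
    (0 < P {ω | lb < (⨅ t, M t ω) ∧ (⨆ t, M t ω) = ub} ∨
      0 < P {ω | (⨅ t, M t ω) = lb ∧ (⨆ t, M t ω) < ub}) ∧
    P {ω | (⨅ t, M t ω) = lb ∧ (⨆ t, M t ω) = ub} = 0 := by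
  have hsup := hmart.ae_limit_eq_of_iSup_eq hcont hUI hlim hM0 hub
  have hinf := hmart.ae_limit_eq_of_iInf_eq hcont hUI hlim hM0 hlb
  have hboth : P {ω | ⨅ t, M t ω = lb ∧ ⨆ t, M t ω = ub} = 0 := by
    rw [measure_eq_zero_iff_ae_notMem]
    filter_upwards [hsup, hinf] with ω h1 h2 ⟨hI, hS⟩
    linarith [h1 hS, h2 hI]
  refine ⟨?_, hboth⟩
  by_contra! h
  rw [nonpos_iff_eq_zero, nonpos_iff_eq_zero] at h
  refine hdisc.not_ge ((measure_setOf_le_and_le_le_add _ _ lb ub).trans ?_)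
  rw [h.1, h.2, hboth, add_zero, add_zero, add_zero]
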